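/- arXiv:2506.04767 — 2 statements merged into one kernel-verified Lean document; each statement's English description precedes it below -/
import Mathlib

section
/- Let μ ∈ (0,1) and suppose r ∈ (0,1], ν* ∈ [0,1], β ∈ [0,1] satisfy β = 1/(2ν* + r + 1/r + 2) and r(ν*)² + (2r + 3 − 2μ)ν* − μ(r + 1/r + 2) = 0. Let P* be the distribution assigning probability β/r to (rν*, rν*), β to each of (ν*, rν*) and (rν*, ν*), βr to (ν*, ν*), and βν* to each of (1, rν*) and (rν*, 1). Then every feasible two-agent mechanism (x,p) satisfies ∫ (p₁ + p₂) dP* ≤ 2βν*(r² + 3r/2 + ν* + 1). -/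
open MeasureTheory Set

noncomputable section

/-- The square `[0,1]²`. -/
def square : Set (ℝ × ℝ) := {ν | ν.1 ∈ Set.Icc (0:ℝ) 1 ∧ ν.2 ∈ Set.Icc (0:ℝ) 1}

/-- A feasible two-agent mechanism: measurable allocation rules `x₁, x₂ ≥ 0` with
`x₁ + x₂ ≤ 1`, and payment rules `p₁, p₂` satisfying (DS-IC) and (EP-IR). -/
structure Feasible2 (x1 x2 p1 p2 : ℝ × ℝ → ℝ) : Prop where
  meas_x1 : Measurable x1
  meas_x2 : Measurable x2
  meas_p1 : Measurable p1
  meas_p2 : Measurable p2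
  x1_nonneg : ∀ ν ∈ square, 0 ≤ x1 ν
  x2_nonneg : ∀ ν ∈ square, 0 ≤ x2 ν
  x_sum : ∀ ν ∈ square, x1 ν + x2 ν ≤ 1
  ic1 : ∀ ν ∈ square, ∀ νh ∈ Set.Icc (0:ℝ) 1,
    p1 ν ≤ ν.1 * (x1 ν - x1 (νh, ν.2)) + νh
  ic2 : ∀ ν ∈ square, ∀ νh ∈ Set.Icc (0:ℝ) 1,
    p2 ν ≤ ν.2 * (x2 ν - x2 (ν.1, νh)) + νh
  ir1 : ∀ ν ∈ square, p1 ν ≤ ν.1 * x1 ν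
  ir2 : ∀ ν ∈ square, p2 ν ≤ ν.2 * x2 ν

/-- The two-agent worst-case candidate distribution built from parameters `r`, `ν*`, `β`. -/
def P2 (r νs β : ℝ) : Measure (ℝ × ℝ) :=
  ENNReal.ofReal (β/r) • Measure.dirac (r*νs, r*νs)
    + ENNReal.ofReal β • Measure.dirac (νs, r*νs)
    + ENNReal.ofReal β • Measure.dirac (r*νs, νs)
    + ENNReal.ofReal (β*r) • Measure.dirac (νs, νs)
    + ENNReal.ofReal (β*νs) • Measure.dirac (1, r*νs)
    + ENNReal.ofReal (β*νs) • Measure.dirac (r*νs, 1)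

/-- Any measurable real function is integrable with respect to a Dirac measure. -/
lemma integrable_dirac_of_measurable {α : Type*} [MeasurableSpace α]
    [MeasurableSingletonClass α] {f : α → ℝ} (hf : Measurable f) (a : α) :
    Integrable f (Measure.dirac a) := by
  refine ⟨hf.aestronglyMeasurable, ?_⟩
  rw [HasFiniteIntegral, lintegral_dirac]
  exact ENNReal.coe_lt_top

/-- Integral of a measurable function with respect to a nonnegative scalar multiple of a
Dirac measure. -/
lemma integral_ofReal_smul_dirac {f : ℝ × ℝ → ℝ} (hf : Measurable f) (c : ℝ) (hc : 0 ≤ c)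
    (a : ℝ × ℝ) :
    ∫ ν, f ν ∂(ENNReal.ofReal c • Measure.dirac a) = c * f a := by
  rw [integral_smul_measure, integral_dirac' f a hf.stronglyMeasurable,
    ENNReal.toReal_ofReal hc, smul_eq_mul]

/-- Computation of the integral with respect to `P2`. -/
lemma integral_P2 {f : ℝ × ℝ → ℝ} (hf : Measurable f) (r νs β : ℝ)
    (hr : 0 < r) (hνs : 0 ≤ νs) (hβ : 0 ≤ β) :
    ∫ ν, f ν ∂(P2 r νs β)
      = β/r * f (r*νs, r*νs) + β * f (νs, r*νs) + β * f (r*νs, νs)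
        + β*r * f (νs, νs) + β*νs * f (1, r*νs) + β*νs * f (r*νs, 1) := by
  have hint : ∀ c : ℝ, ∀ a : ℝ × ℝ,
      Integrable f (ENNReal.ofReal c • Measure.dirac a) := fun c a =>
    (integrable_dirac_of_measurable hf a).smul_measure ENNReal.ofReal_ne_top
  have hadd : ∀ μ ν : Measure (ℝ × ℝ), Integrable f μ → Integrable f ν →
      ∫ x, f x ∂(μ + ν) = ∫ x, f x ∂μ + ∫ x, f x ∂ν := fun μ ν h1 h2 =>
    integral_add_measure h1 h2
  unfold P2
  rw [hadd _ _ ((((hint _ _).add_measure (hint _ _)).add_measure (hint _ _)).add_measure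
      ((hint _ _)) |>.add_measure (hint _ _)) (hint _ _),
    hadd _ _ ((((hint _ _).add_measure (hint _ _)).add_measure (hint _ _)).add_measure
      (hint _ _)) (hint _ _),
    hadd _ _ (((hint _ _).add_measure (hint _ _)).add_measure (hint _ _)) (hint _ _),
    hadd _ _ ((hint _ _).add_measure (hint _ _)) (hint _ _),
    hadd _ _ (hint _ _) (hint _ _)]
  rw [integral_ofReal_smul_dirac hf _ (by positivity),
    integral_ofReal_smul_dirac hf _ hβ,
    integral_ofReal_smul_dirac hf _ hβ,
    integral_ofReal_smul_dirac hf _ (by positivity),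
    integral_ofReal_smul_dirac hf _ (by positivity),
    integral_ofReal_smul_dirac hf _ (by positivity)]

set_option maxHeartbeats 1000000 in
/-- The scalar certificate inequality. -/
lemma key_ineq (r νs β A A' B B' C C' D D' E E' F F'
    pa1 pa2 pb1 pb2 pc1 pc2 pd1 pd2 pe1 pe2 pf1 pf2 : ℝ)
    (hr : 0 < r) (hr1 : r ≤ 1) (hνs : 0 ≤ νs) (hνs1 : νs ≤ 1) (hβ : 0 ≤ β)
    (hA1 : pa1 ≤ r*νs*A) (hA2 : pa2 ≤ r*νs*A')
    (hB1 : pb1 ≤ νs*(B - A) + r*νs) (hB2 : pb2 ≤ r*νs*B')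
    (hC1 : pc1 ≤ r*νs*C) (hC2 : pc2 ≤ νs*(C' - A') + r*νs)
    (hD1 : pd1 ≤ νs*(D - C) + r*νs) (hD2 : pd2 ≤ νs*(D' - B') + r*νs)
    (hE1 : pe1 ≤ 1*(E - B) + νs) (hE2 : pe2 ≤ r*νs*E')
    (hF1 : pf1 ≤ r*νs*F) (hF2 : pf2 ≤ 1*(F' - C') + νs)
    (hDD : D + D' ≤ 1) (hEE : E + E' ≤ 1) (hE0 : 0 ≤ E') (hFF : F + F' ≤ 1) (hF0 : 0 ≤ F) :
    β/r*(pa1+pa2) + β*(pb1+pb2) + β*(pc1+pc2) + β*r*(pd1+pd2)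
      + β*νs*(pe1+pe2) + β*νs*(pf1+pf2) ≤ 2*β*νs*(r^2 + 3*r/2 + νs + 1) := by
  have hβr : (0:ℝ) ≤ β/r := by positivity
  have hrνs : r*νs ≤ 1 := by nlinarith
  have h1 : β/r*(pa1+pa2) ≤ β*νs*(A+A') := by
    have h : pa1+pa2 ≤ r*νs*(A+A') := by linarith
    calc β/r*(pa1+pa2) ≤ β/r*(r*νs*(A+A')) := mul_le_mul_of_nonneg_left h hβr
      _ = β*νs*(A+A') := by field_simp
  have h2 : β*(pb1+pb2) ≤ β*(νs*(B - A) + r*νs + r*νs*B') :=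
    mul_le_mul_of_nonneg_left (by linarith) hβ
  have h3 : β*(pc1+pc2) ≤ β*(r*νs*C + νs*(C' - A') + r*νs) :=
    mul_le_mul_of_nonneg_left (by linarith) hβ
  have h4 : β*r*(pd1+pd2) ≤ β*r*(νs*(D - C) + νs*(D' - B') + 2*(r*νs)) :=
    mul_le_mul_of_nonneg_left (by linarith) (by positivity)
  have h5 : β*νs*(pe1+pe2) ≤ β*νs*((E - B) + νs + r*νs*E') :=
    mul_le_mul_of_nonneg_left (by linarith) (by positivity)
  have h6 : β*νs*(pf1+pf2) ≤ β*νs*(r*νs*F + (F' - C') + νs) :=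
    mul_le_mul_of_nonneg_left (by linarith) (by positivity)
  have hDD' : β*r*νs*(D+D') ≤ β*r*νs*1 :=
    mul_le_mul_of_nonneg_left hDD (by positivity)
  have hEE' : β*νs*(E + r*νs*E') ≤ β*νs*1 := by
    refine mul_le_mul_of_nonneg_left ?_ (by positivity)
    nlinarith [mul_le_mul_of_nonneg_right hrνs hE0]
  have hFF' : β*νs*(F' + r*νs*F) ≤ β*νs*1 := by
    refine mul_le_mul_of_nonneg_left ?_ (by positivity)
    nlinarith [mul_le_mul_of_nonneg_right hrνs hF0]
  have total : β*νs*(A+A') + β*(νs*(B - A) + r*νs + r*νs*B')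
      + β*(r*νs*C + νs*(C' - A') + r*νs)
      + β*r*(νs*(D - C) + νs*(D' - B') + 2*(r*νs))
      + β*νs*((E - B) + νs + r*νs*E') + β*νs*(r*νs*F + (F' - C') + νs)
      = β*r*νs*(D+D') + β*νs*(E + r*νs*E') + β*νs*(F' + r*νs*F)
        + 2*(β*r*νs) + 2*(β*νs)*r^2 + 2*(β*νs)*νs := by ring
  have tgt : 2*β*νs*(r^2 + 3*r/2 + νs + 1)
      = β*r*νs*1 + β*νs*1 + β*νs*1 + 2*(β*r*νs) + 2*(β*νs)*r^2 + 2*(β*νs)*νs := by ring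
  linarith [h1, h2, h3, h4, h5, h6, hDD', hEE', hFF']

set_option maxHeartbeats 1000000 in
/-- Under the two-agent worst-case candidate distribution `P*`, every
feasible two-agent mechanism earns at most `2βν*(r² + 3r/2 + ν* + 1)` in expected aggregate
payment. -/
theorem two_agent_upper_bound
    (μ r νs β : ℝ) (hμ : μ ∈ Set.Ioo (0:ℝ) 1)
    (hr : r ∈ Set.Ioc (0:ℝ) 1) (hνs : νs ∈ Set.Icc (0:ℝ) 1) (hβ : β ∈ Set.Icc (0:ℝ) 1)
    (hβeq : β = 1/(2*νs + r + 1/r + 2))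
    (hmean : r*νs^2 + (2*r + 3 - 2*μ)*νs - μ*(r + 1/r + 2) = 0) :
    ∀ x1 x2 p1 p2 : ℝ × ℝ → ℝ, Feasible2 x1 x2 p1 p2 →
      ∫ ν, (p1 ν + p2 ν) ∂(P2 r νs β) ≤ 2*β*νs*(r^2 + 3*r/2 + νs + 1) := by
  intro x1 x2 p1 p2 hF
  obtain ⟨hr0, hr1⟩ := hr
  obtain ⟨hνs0, hνs1⟩ := hνs
  obtain ⟨hβ0, hβ1⟩ := hβ
  have hrνs0 : (0:ℝ) ≤ r*νs := by positivity
  have hrνs1 : r*νs ≤ 1 := by nlinarith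
  have hmem_r : r*νs ∈ Set.Icc (0:ℝ) 1 := ⟨hrνs0, hrνs1⟩
  have hmem_ν : νs ∈ Set.Icc (0:ℝ) 1 := ⟨hνs0, hνs1⟩
  have hmem_1 : (1:ℝ) ∈ Set.Icc (0:ℝ) 1 := ⟨zero_le_one, le_refl 1⟩
  have ha : ((r*νs, r*νs) : ℝ × ℝ) ∈ square := ⟨hmem_r, hmem_r⟩
  have hb : ((νs, r*νs) : ℝ × ℝ) ∈ square := ⟨hmem_ν, hmem_r⟩
  have hc : ((r*νs, νs) : ℝ × ℝ) ∈ square := ⟨hmem_r, hmem_ν⟩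
  have hd : ((νs, νs) : ℝ × ℝ) ∈ square := ⟨hmem_ν, hmem_ν⟩
  have he : ((1, r*νs) : ℝ × ℝ) ∈ square := ⟨hmem_1, hmem_r⟩
  have hf : ((r*νs, 1) : ℝ × ℝ) ∈ square := ⟨hmem_r, hmem_1⟩
  have hmeas : Measurable (fun ν => p1 ν + p2 ν) := hF.meas_p1.add hF.meas_p2
  rw [integral_P2 hmeas r νs β hr0 hνs0 hβ0]
  -- pointwise payment bounds
  have hA1 := hF.ir1 _ ha
  have hA2 := hF.ir2 _ ha
  have hB1 := hF.ic1 _ hb (r*νs) hmem_r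
  have hB2 := hF.ir2 _ hb
  have hC1 := hF.ir1 _ hc
  have hC2 := hF.ic2 _ hc (r*νs) hmem_r
  have hD1 := hF.ic1 _ hd (r*νs) hmem_r
  have hD2 := hF.ic2 _ hd (r*νs) hmem_r
  have hE1 := hF.ic1 _ he νs hmem_ν
  have hE2 := hF.ir2 _ he
  have hF1 := hF.ir1 _ hf
  have hF2 := hF.ic2 _ hf νs hmem_ν
  have hDD := hF.x_sum _ hd
  have hEE := hF.x_sum _ he
  have hE0 := hF.x2_nonneg _ he
  have hFF := hF.x_sum _ hf
  have hF0 := hF.x1_nonneg _ hf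
  simp only at hA1 hA2 hB1 hB2 hC1 hC2 hD1 hD2 hE1 hE2 hF1 hF2
  exact key_ineq r νs β (x1 (r*νs, r*νs)) (x2 (r*νs, r*νs))
    (x1 (νs, r*νs)) (x2 (νs, r*νs)) (x1 (r*νs, νs)) (x2 (r*νs, νs))
    (x1 (νs, νs)) (x2 (νs, νs)) (x1 (1, r*νs)) (x2 (1, r*νs))
    (x1 (r*νs, 1)) (x2 (r*νs, 1))
    (p1 (r*νs, r*νs)) (p2 (r*νs, r*νs)) (p1 (νs, r*νs)) (p2 (νs, r*νs))
    (p1 (r*νs, νs)) (p2 (r*νs, νs)) (p1 (νs, νs)) (p2 (νs, νs))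
    (p1 (1, r*νs)) (p2 (1, r*νs)) (p1 (r*νs, 1)) (p2 (r*νs, 1))
    hr0 hr1 hνs0 hνs1 hβ0 hA1 hA2 hB1 hB2 hC1 hC2 hD1 hD2 hE1 hE2 hF1 hF2
    hDD hEE hE0 hFF hF0

end
end

section
/- Fix μ* = 0.107 and let (x^s, p_m^s) be the maximal-payment mechanism defined from μ* (with parameters δ, λ₀, λ₁, ν̲, ν̄, ν★, τ, ν°, ν', ν'' computed at μ*). For every μ ∈ (0, 0.107): (i) the worst-case expected payment of (x^s, p_m^s) satisfies inf over P ∈ P_μ of ∫ p_m^s dP = μ·x^s(μ) if μ ∈ (0, ν̲], and = λ₁μ + λ₀ if μ ∈ [ν̲, μ*]; and (ii) the optimal worst-case revenue satisfies z*(μ) ≤ b(μ) := min{ μ/(2−μ), (μ/3)(√(μ/(3−μ)) + 1)² }. Hence, writing z_{μ*} for the value in (i), the mechanism satisfies z_{μ*} ≥ (z_{μ*}/b(μ))·z*(μ) and z_{μ*} ≥ z*(μ) − (b(μ) − z_{μ*}). -/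
open MeasureTheory Set

noncomputable section

/-- A Borel probability measure on ℝ supported on `[0,1]`. -/
def IsDistOn01 (P : Measure ℝ) : Prop :=
  IsProbabilityMeasure P ∧ P (Set.Icc (0:ℝ) 1)ᶜ = 0

/-- Membership in the first-moment ambiguity set `P_μ`. -/
def MemAmb (μ : ℝ) (P : Measure ℝ) : Prop :=
  IsDistOn01 P ∧ ∫ ν, ν ∂P = μ

/-- A feasible single-agent mechanism. -/
structure Feasible (x p : ℝ → ℝ) : Prop where
  meas_x : Measurable x
  meas_p : Measurable p
  x_mem : ∀ ν ∈ Set.Icc (0:ℝ) 1, x ν ∈ Set.Icc (0:ℝ) 1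
  ic : ∀ ν ∈ Set.Icc (0:ℝ) 1, ∀ νh ∈ Set.Icc (0:ℝ) 1, p ν ≤ ν * (x ν - x νh) + νh
  ir : ∀ ν ∈ Set.Icc (0:ℝ) 1, p ν ≤ ν * x ν

/-- Worst-case expected payment of a payment rule `p` over the ambiguity set `P_μ`. -/
def worstCase (μ : ℝ) (p : ℝ → ℝ) : ℝ :=
  sInf {v : ℝ | ∃ P : Measure ℝ, MemAmb μ P ∧ v = ∫ ν, p ν ∂P}

/-- The seller's optimal worst-case revenue `z*(μ)`. -/
def zStar (μ : ℝ) : ℝ :=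
  sSup {z : ℝ | ∃ x p : ℝ → ℝ, Feasible x p ∧ z = worstCase μ p}

/-- `δ = μ/(3-μ)`. -/
def del (μ : ℝ) : ℝ := μ/(3-μ)

/-- `λ₀ = −δ√δ(√δ + 1)`. -/
def l0 (μ : ℝ) : ℝ := -(del μ * Real.sqrt (del μ) * (Real.sqrt (del μ) + 1))

/-- `λ₁ = (√δ + 1)²/3 − λ₀/μ`. -/
def l1 (μ : ℝ) : ℝ := (Real.sqrt (del μ) + 1)^2/3 - l0 μ/μ

/-- `ν̲ = −2λ₀/λ₁`. -/
def nLow (μ : ℝ) : ℝ := -2*l0 μ/l1 μ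

/-- `ν̄ = λ₁ + λ₀`. -/
def nBar (μ : ℝ) : ℝ := l1 μ + l0 μ

/-- `ν★ = 2 − λ₁ − 2√(1 − ν̄)`. -/
def nStar (μ : ℝ) : ℝ := 2 - l1 μ - 2*Real.sqrt (1 - nBar μ)

/-- `τ = λ₁ − ν★ + ν̄ − 1`. -/
def tauP (μ : ℝ) : ℝ := l1 μ - nStar μ + nBar μ - 1

/-- `ν° = (−λ₀ − √(λ₀² + τλ₀ν★))/τ`. -/
def nCirc (μ : ℝ) : ℝ :=
  (-l0 μ - Real.sqrt ((l0 μ)^2 + tauP μ * l0 μ * nStar μ))/tauP μ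

/-- The allocation rule `x^s`. -/
def xs (μ ν : ℝ) : ℝ :=
  if ν ≤ nLow μ then -(l0 μ/(nLow μ)^2) * ν
  else if ν ≤ nCirc μ then l1 μ + l0 μ/ν
  else if ν ≤ nStar μ then -(l0 μ/(nCirc μ)^2) * ν + l1 μ + 2*l0 μ/nCirc μ
  else if ν ≤ nBar μ then ν - nBar μ + 1
  else 1

/-- The linear payment rule `p^s(ν) = λ₁ν + λ₀`. -/
def ps (μ ν : ℝ) : ℝ := l1 μ * ν + l0 μ

/-- `ν' = −ν̲²/λ₀`. -/
def nP (μ : ℝ) : ℝ := -(nLow μ)^2/l0 μ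

/-- `ν'' = −ν°²/λ₀`. -/
def nPP (μ : ℝ) : ℝ := -(nCirc μ)^2/l0 μ

/-- The maximal payment rule `p_m^s`. -/
def pms (μ ν : ℝ) : ℝ :=
  if ν ≤ nP μ then ν * xs μ ν
  else if ν ≤ nPP μ then ν*(ν - nBar μ + 1 - l1 μ) + 2*Real.sqrt (-(l0 μ)*ν)
  else if ν ≤ nBar μ then ν*(ν - nStar μ) + nStar μ
  else ν*(nBar μ - nStar μ) + nStar μ

/-- The upper bound `b(μ) = min{ μ/(2−μ), (μ/3)(√(μ/(3−μ)) + 1)² }`. -/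
def bBound (μ : ℝ) : ℝ :=
  min (μ/(2-μ)) ((μ/3)*(Real.sqrt (μ/(3-μ)) + 1)^2)

/-!
The worst case of `p_m^s` is computed by duality. On `[0,1]` the payment rule `p_m^s` lies
above the line `p^s(ν) = λ₁ν + λ₀` and touches it at `ν̲` and at `1`, so for `μ ≥ ν̲` every
`P ∈ P_μ` pays at least `p^s(μ)`, and the two-point law on `{ν̲, 1}` with mean `μ` pays exactly
that. For `μ ≤ ν̲` the supporting line is instead the tangent at `μ` of the parabola
`x^s(ν̲)/ν̲ · ν²`, which is `p_m^s` on `[0, ν̲]` and has `p^s` as its tangent at `ν̲`; the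
extremal law is the Dirac mass at `μ`. Each branch of `p_m^s` dominates `p^s` on all of
`[0,1]`, mostly because the gap is a square times a nonnegative factor, so the breakpoints
barely matter: only `ν̲ ≤ ν'` and `ν', ν'', ν̄ < 1` enter, and they follow from `0.19 < √δ < 0.2`.

The upper bound on `z*(μ)` evaluates an arbitrary feasible mechanism against two
equal-revenue laws (weights `k / aᵢ` on atoms `aᵢ`): IR at the lowest atom and IC between
consecutive atoms make the allocation terms telescope, leaving `μ/(2-μ)` for the atoms
`{μ/(2-μ), 1}` and `(μ/3)(s+1)²` for the atoms `{s²(s+1), s²+s, 1}`, `s = √(μ/(3-μ))`.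
-/

def discreteDist {n : ℕ} (w a : Fin n → ℝ) : Measure ℝ :=
  ∑ i, ENNReal.ofReal (w i) • Measure.dirac (a i)

section DiscreteDist

variable {n : ℕ} {w a : Fin n → ℝ}

lemma integral_discreteDist (hw : ∀ i, 0 ≤ w i) (f : ℝ → ℝ) :
    ∫ ν, f ν ∂discreteDist w a = ∑ i, w i * f (a i) := by
  rw [discreteDist, integral_finsetSum_measure fun i _ =>
    (integrable_dirac enorm_lt_top).smul_measure ENNReal.ofReal_ne_top]
  simp [integral_smul_measure, ENNReal.toReal_ofReal (hw _)]

lemma memAmb_discreteDist (hw : ∀ i, 0 ≤ w i) (hw1 : ∑ i, w i = 1)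
    (ha : ∀ i, a i ∈ Icc (0:ℝ) 1) : MemAmb (∑ i, w i * a i) (discreteDist w a) := by
  refine ⟨⟨⟨?_⟩, ?_⟩, integral_discreteDist hw id⟩
  · simp [discreteDist, ← ENNReal.ofReal_sum_of_nonneg fun i _ => hw i, hw1]
  · simp [discreteDist, Measure.dirac_apply' _ measurableSet_Icc.compl, ha]

end DiscreteDist

lemma integral_twoPoint {θ a b : ℝ} (hθ : θ ∈ Icc (0:ℝ) 1) (f : ℝ → ℝ) :
    ∫ ν, f ν ∂discreteDist ![θ, 1 - θ] ![a, b] = θ * f a + (1 - θ) * f b := by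
  rw [integral_discreteDist (Fin.forall_fin_two.2 ⟨hθ.1, sub_nonneg.2 hθ.2⟩), Fin.sum_univ_two]
  rfl

lemma memAmb_twoPoint {θ a b : ℝ} (hθ : θ ∈ Icc (0:ℝ) 1) (ha : a ∈ Icc (0:ℝ) 1)
    (hb : b ∈ Icc (0:ℝ) 1) :
    MemAmb (θ * a + (1 - θ) * b) (discreteDist ![θ, 1 - θ] ![a, b]) := by
  have := memAmb_discreteDist (w := ![θ, 1 - θ]) (a := ![a, b])
    (Fin.forall_fin_two.2 ⟨hθ.1, sub_nonneg.2 hθ.2⟩) (by simp) (Fin.forall_fin_two.2 ⟨ha, hb⟩)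
  rwa [Fin.sum_univ_two] at this

lemma memAmb_dirac {μ : ℝ} (hμ : μ ∈ Icc (0:ℝ) 1) : MemAmb μ (Measure.dirac μ) :=
  ⟨⟨inferInstance, by simp [Measure.dirac_apply' _ measurableSet_Icc.compl, hμ]⟩, by simp⟩

section WorstCase

variable {μ : ℝ} {P : Measure ℝ}

lemma ae_mem_Icc_of_memAmb (hP : MemAmb μ P) : ∀ᵐ ν ∂P, ν ∈ Icc (0:ℝ) 1 :=
  (measure_eq_zero_iff_ae_notMem.1 hP.1.2).mono fun _ h => not_not.1 h

lemma integrable_of_memAmb (hP : MemAmb μ P) {f : ℝ → ℝ} (hf : Measurable f)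
    (hbdd : ∃ C, ∀ ν ∈ Icc (0:ℝ) 1, ‖f ν‖ ≤ C) : Integrable f P := by
  obtain ⟨C, hC⟩ := hbdd
  have := hP.1.1
  exact Integrable.of_bound hf.aestronglyMeasurable C ((ae_mem_Icc_of_memAmb hP).mono hC)

lemma affine_le_integral (hP : MemAmb μ P) {f : ℝ → ℝ} (hf : Measurable f)
    (hbdd : ∃ C, ∀ ν ∈ Icc (0:ℝ) 1, ‖f ν‖ ≤ C) {α β : ℝ}
    (hle : ∀ ν ∈ Icc (0:ℝ) 1, α * ν + β ≤ f ν) : α * μ + β ≤ ∫ ν, f ν ∂P := by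
  have := hP.1.1
  have hid : Integrable (fun ν : ℝ => ν) P := integrable_of_memAmb hP measurable_id
    ⟨1, fun ν hν => abs_le.2 ⟨by linarith [hν.1], hν.2⟩⟩
  calc α * μ + β = ∫ ν, (α * ν + β) ∂P := by
        rw [integral_add (hid.const_mul α) (integrable_const β), integral_const_mul, hP.2]
        simp
    _ ≤ ∫ ν, f ν ∂P := integral_mono_ae ((hid.const_mul α).add (integrable_const β))
        (integrable_of_memAmb hP hf hbdd) ((ae_mem_Icc_of_memAmb hP).mono hle)

lemma worstCase_eq_of_affine_le {α β : ℝ} {p : ℝ → ℝ} (hp : Measurable p)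
    (hbdd : ∃ C, ∀ ν ∈ Icc (0:ℝ) 1, ‖p ν‖ ≤ C) (hle : ∀ ν ∈ Icc (0:ℝ) 1, α * ν + β ≤ p ν)
    (hP : MemAmb μ P) (hPv : ∫ ν, p ν ∂P = α * μ + β) : worstCase μ p = α * μ + β :=
  IsLeast.csInf_eq ⟨⟨P, hP, hPv.symm⟩, by
    rintro _ ⟨Q, hQ, rfl⟩
    exact affine_le_integral hQ hp hbdd hle⟩

lemma worstCase_le_of_memAmb {b : ℝ} {p : ℝ → ℝ} (hb : 0 ≤ b) (hP : MemAmb μ P)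
    (hPb : ∫ ν, p ν ∂P ≤ b) : worstCase μ p ≤ b := by
  by_cases hbdd : BddBelow {v : ℝ | ∃ P : Measure ℝ, MemAmb μ P ∧ v = ∫ ν, p ν ∂P}
  · exact (csInf_le hbdd ⟨P, hP, rfl⟩).trans hPb
  · rw [worstCase, Real.sInf_of_not_bddBelow hbdd]
    exact hb

lemma worstCase_nonneg {p : ℝ → ℝ} (hp : ∀ ν ∈ Icc (0:ℝ) 1, 0 ≤ p ν) : 0 ≤ worstCase μ p := by
  apply Real.sInf_nonneg
  rintro _ ⟨P, hP, rfl⟩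
  exact integral_nonneg_of_ae ((ae_mem_Icc_of_memAmb hP).mono hp)

end WorstCase

section Parameters

variable {μ : ℝ}

lemma sq_sqrt_del (h0 : 0 ≤ μ) (h3 : μ < 3) : √(del μ) ^ 2 = del μ :=
  Real.sq_sqrt (div_nonneg h0 (by linarith))

lemma mul_one_add_sq_sqrt_del (h0 : 0 ≤ μ) (h3 : μ < 3) :
    μ * (1 + √(del μ) ^ 2) = 3 * √(del μ) ^ 2 := by
  have : 3 - μ ≠ 0 := by linarith
  rw [sq_sqrt_del h0 h3, del]
  field_simp
  ring

lemma l0_eq (h0 : 0 ≤ μ) (h3 : μ < 3) : l0 μ = -(√(del μ) ^ 4 + √(del μ) ^ 3) := by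
  unfold l0
  nth_rw 1 [← sq_sqrt_del h0 h3]
  ring

lemma l1_eq (h0 : 0 < μ) (h3 : μ < 3) :
    l1 μ = (√(del μ) + 1) * (√(del μ) ^ 3 + 2 * √(del μ) + 1) / 3 := by
  rw [l1, l0]
  field_simp
  linear_combination (-√(del μ)) * mul_one_add_sq_sqrt_del h0.le h3
    - 3 * √(del μ) * sq_sqrt_del h0.le h3

lemma three_mul_l1_add_l0 (h0 : 0 < μ) (h3 : μ < 3) :
    3 * l1 μ + l0 μ - 1 = 2 * √(del μ) ^ 2 + 3 * √(del μ) := by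
  rw [l1_eq h0 h3, l0_eq h0.le h3]
  ring

lemma sqrt_neg_l0 (h0 : 0 ≤ μ) (h3 : μ < 3) :
    √(-l0 μ) = √(del μ) * √(√(del μ) ^ 2 + √(del μ)) := by
  rw [l0_eq h0 h3, neg_neg,
    show √(del μ) ^ 4 + √(del μ) ^ 3 = √(del μ) ^ 2 * (√(del μ) ^ 2 + √(del μ)) by ring,
    Real.sqrt_mul (by positivity), Real.sqrt_sq (Real.sqrt_nonneg _)]

lemma l1_add_two_mul_l0_div_nLow (hl0 : l0 μ ≠ 0) :
    l1 μ + 2 * l0 μ / nLow μ = 0 := by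
  unfold nLow
  field_simp
  ring

-- Rationalising, `ν° = -λ₀ν★ / (-λ₀ + √(λ₀² + τλ₀ν★))`; for `τ = 0` the junk value
-- `x / 0 = 0` gives `ν° = 0`.
lemma nCirc_mem_Icc (hl0 : l0 μ < 0) (hnStar : 0 ≤ nStar μ)
    (htau : tauP μ * nStar μ ≤ 3 / 4 * -l0 μ) : nCirc μ ∈ Icc 0 (2 / 3 * nStar μ) := by
  rcases eq_or_ne (tauP μ) 0 with h | h
  · simp [nCirc, h, hnStar]
  have hR : (-l0 μ / 2) ^ 2 ≤ l0 μ ^ 2 + tauP μ * l0 μ * nStar μ := by nlinarith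
  have hsqrt := Real.le_sqrt_of_sq_le hR
  have hpos : 0 < -l0 μ + √(l0 μ ^ 2 + tauP μ * l0 μ * nStar μ) := by linarith
  have hrat : nCirc μ =
      -l0 μ * nStar μ / (-l0 μ + √(l0 μ ^ 2 + tauP μ * l0 μ * nStar μ)) := by
    rw [nCirc, div_eq_div_iff h hpos.ne']
    linear_combination -Real.sq_sqrt (le_trans (sq_nonneg _) hR)
  rw [hrat]
  constructor
  · exact div_nonneg (mul_nonneg (by linarith) hnStar) hpos.le
  · rw [div_le_iff₀ hpos]
    nlinarith

end Parameters

section Pieces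

variable {μ ν : ℝ}

-- `-(λ₀/c²)ν + λ₁ + 2λ₀/c` is the tangent at `c` of `λ₁ + λ₀/ν`.
lemma ps_le_mul_tangent (hl0 : l0 μ ≤ 0) (c : ℝ) :
    ps μ ν ≤ ν * (-(l0 μ / c ^ 2) * ν + l1 μ + 2 * l0 μ / c) := by
  have key : ν * (-(l0 μ / c ^ 2) * ν + l1 μ + 2 * l0 μ / c) - ps μ ν
      = -l0 μ * (ν / c - 1) ^ 2 := by
    unfold ps; ring
  nlinarith [mul_nonneg (neg_nonneg.2 hl0) (sq_nonneg (ν / c - 1))]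

lemma ps_le_mul_sub_nBar_add_one (hdisc : (nBar μ + l1 μ - 1) ^ 2 ≤ -4 * l0 μ) :
    ps μ ν ≤ ν * (ν - nBar μ + 1) := by
  unfold ps
  nlinarith [sq_nonneg (ν - (nBar μ + l1 μ - 1) / 2)]

-- With `s = √δ`, `T = √(s² + s)` and `ν = t²` the gap is `(t - T)²(t² + 2Tt + s²)`.
lemma ps_le_sqrt_piece (h0 : 0 < μ) (h3 : μ < 3) (hν : 0 ≤ ν) :
    ps μ ν ≤ ν * (ν - nBar μ + 1 - l1 μ) + 2 * √(-l0 μ * ν) := by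
  obtain ⟨t, ht, rfl⟩ : ∃ t, 0 ≤ t ∧ ν = t ^ 2 := ⟨√ν, Real.sqrt_nonneg _, (Real.sq_sqrt hν).symm⟩
  set s := √(del μ)
  set T := √(s ^ 2 + s)
  have hs : 0 ≤ s := Real.sqrt_nonneg _
  have hT : T ^ 2 = s ^ 2 + s := Real.sq_sqrt (by positivity)
  have hl0 : 0 ≤ -l0 μ := by rw [l0_eq h0.le h3, neg_neg]; positivity
  rw [Real.sqrt_mul hl0, sqrt_neg_l0 h0.le h3, Real.sqrt_sq ht]
  have key : t ^ 2 * (t ^ 2 - nBar μ + 1 - l1 μ) + 2 * (s * T * t) - ps μ (t ^ 2)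
      = (t - T) ^ 2 * (t ^ 2 + 2 * T * t + s ^ 2) := by
    rw [ps, nBar]
    linear_combination (3 * t ^ 2 - 2 * T * t - s ^ 2) * hT
      - t ^ 2 * three_mul_l1_add_l0 h0 h3 - l0_eq h0.le h3
  nlinarith [mul_nonneg (sq_nonneg (t - T)) (by positivity : 0 ≤ t ^ 2 + 2 * T * t + s ^ 2)]

lemma ps_le_quadratic_piece (hnBar : nBar μ ≤ 1) :
    ps μ ν ≤ ν * (ν - nStar μ) + nStar μ := by
  have hu := Real.sq_sqrt (sub_nonneg.2 hnBar)
  have key : ν * (ν - nStar μ) + nStar μ - ps μ ν = (ν - (1 - √(1 - nBar μ))) ^ 2 := by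
    rw [nStar, ps, nBar] at *
    linear_combination -hu
  nlinarith [sq_nonneg (ν - (1 - √(1 - nBar μ)))]

lemma ps_le_last_piece (hnBar : nBar μ ≤ 1) (hν : ν ≤ 1) :
    ps μ ν ≤ ν * (nBar μ - nStar μ) + nStar μ := by
  have hu := Real.sq_sqrt (sub_nonneg.2 hnBar)
  have key : ν * (nBar μ - nStar μ) + nStar μ - ps μ ν
      = (1 - √(1 - nBar μ)) ^ 2 * (1 - ν) := by
    rw [nStar, ps, nBar] at *
    linear_combination (ν - 1) * hu
  nlinarith [mul_nonneg (sq_nonneg (1 - √(1 - nBar μ))) (sub_nonneg.2 hν)]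

lemma xs_of_le_nLow (h : ν ≤ nLow μ) : xs μ ν = -(l0 μ / nLow μ ^ 2) * ν := by
  rw [xs, if_pos h]

lemma ps_eq_tangent (hl0 : l0 μ ≠ 0) (hl1 : l1 μ ≠ 0) :
    ps μ ν = xs μ (nLow μ) * (2 * ν - nLow μ) := by
  have hnLow : nLow μ ≠ 0 := by unfold nLow; positivity
  have hl1 : l1 μ = -2 * l0 μ / nLow μ := by linear_combination l1_add_two_mul_l0_div_nLow hl0
  rw [xs_of_le_nLow le_rfl, ps, hl1]
  field_simp
  ring

end Pieces
lemma measurable_pms (μ : ℝ) : Measurable (pms μ) := by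
  unfold pms xs
  repeat' first
    | exact measurableSet_le measurable_id measurable_const
    | apply Measurable.ite
    | fun_prop
    | apply measurable_id.mul

lemma exists_norm_le_ite {s : Set ℝ} {p : ℝ → Prop} [DecidablePred p] {f g : ℝ → ℝ}
    (hf : ∃ C, ∀ ν ∈ s, ‖f ν‖ ≤ C) (hg : ∃ C, ∀ ν ∈ s, ‖g ν‖ ≤ C) :
    ∃ C, ∀ ν ∈ s, ‖if p ν then f ν else g ν‖ ≤ C := by
  obtain ⟨C, hC⟩ := hf
  obtain ⟨D, hD⟩ := hg
  refine ⟨max C D, fun ν hν => ?_⟩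
  split_ifs
  · exact le_max_of_le_left (hC ν hν)
  · exact le_max_of_le_right (hD ν hν)

lemma norm_mul_add_div_le {a b ν : ℝ} (hν : ν ∈ Icc (0:ℝ) 1) :
    ‖ν * (a + b / ν)‖ ≤ |a| + |b| := by
  rcases eq_or_ne ν 0 with rfl | h
  · simp only [zero_mul, norm_zero]
    positivity
  rw [mul_add, mul_div_cancel₀ _ h, Real.norm_eq_abs]
  calc |ν * a + b| ≤ |ν| * |a| + |b| := by rw [← abs_mul]; exact abs_add_le _ _
    _ ≤ |a| + |b| := by
      gcongr
      exact mul_le_of_le_one_left (abs_nonneg _) (abs_le.2 ⟨by linarith [hν.1], hν.2⟩)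

-- Every branch is continuous on `[0,1]` except `ν (λ₁ + λ₀/ν)`, which is `λ₁ν + λ₀` off `0`.
lemma exists_norm_pms_le (μ : ℝ) : ∃ C, ∀ ν ∈ Icc (0:ℝ) 1, ‖pms μ ν‖ ≤ C := by
  have hcont (f : ℝ → ℝ) (hf : Continuous f) : ∃ C, ∀ ν ∈ Icc (0:ℝ) 1, ‖f ν‖ ≤ C :=
    isCompact_Icc.exists_bound_of_continuousOn hf.continuousOn
  simp only [pms, xs, mul_ite]
  repeat' first
    | apply exists_norm_le_ite
    | exact ⟨_, fun ν hν => norm_mul_add_div_le hν⟩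
    | apply hcont; fun_prop

namespace MuStar

variable {μ ν : ℝ}

lemma sqrt_del_mem : √(del 0.107) ∈ Ioo 0.19 0.2 := by
  rw [show del 0.107 = 107 / 2893 by norm_num [del]]
  constructor
  · rw [Real.lt_sqrt (by norm_num)]; norm_num
  · rw [Real.sqrt_lt' (by norm_num)]; norm_num

lemma pow_sqrt_del_mem {n : ℕ} (hn : n ≠ 0) :
    √(del 0.107) ^ n ∈ Ioo (0.19 ^ n) (0.2 ^ n) := by
  obtain ⟨h1, h2⟩ := sqrt_del_mem
  exact ⟨pow_lt_pow_left₀ h1 (by norm_num) hn, pow_lt_pow_left₀ h2 (by linarith) hn⟩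

lemma l0_mem : l0 0.107 ∈ Ioo (-0.0096) (-0.0069) := by
  obtain ⟨a3, b3⟩ := pow_sqrt_del_mem (n := 3) (by norm_num)
  obtain ⟨a4, b4⟩ := pow_sqrt_del_mem (n := 4) (by norm_num)
  rw [l0_eq (by norm_num) (by norm_num)]
  constructor <;> norm_num at * <;> linarith

lemma l1_mem : l1 0.107 ∈ Ioo 0.55 0.5633 := by
  obtain ⟨a1, b1⟩ := pow_sqrt_del_mem (n := 1) (by norm_num)
  obtain ⟨a2, b2⟩ := pow_sqrt_del_mem (n := 2) (by norm_num)
  obtain ⟨a3, b3⟩ := pow_sqrt_del_mem (n := 3) (by norm_num)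
  obtain ⟨a4, b4⟩ := pow_sqrt_del_mem (n := 4) (by norm_num)
  rw [l1_eq (by norm_num) (by norm_num)]
  constructor <;> norm_num at * <;> nlinarith

lemma l0_neg : l0 0.107 < 0 := l0_mem.2.trans (by norm_num)

lemma l1_pos : 0 < l1 0.107 := lt_trans (by norm_num) l1_mem.1

lemma nBar_lt_one : nBar 0.107 < 1 := by
  rw [nBar]; linarith [l0_mem.2, l1_mem.2]

lemma discriminant_le : (nBar 0.107 + l1 0.107 - 1) ^ 2 ≤ -4 * l0 0.107 := by
  obtain ⟨a1, a2⟩ := l0_mem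
  obtain ⟨b1, b2⟩ := l1_mem
  rw [nBar]; nlinarith

lemma sqrt_one_sub_nBar_mem : √(1 - nBar 0.107) ∈ Ioo 0.666 0.678 := by
  obtain ⟨a1, a2⟩ := l0_mem
  obtain ⟨b1, b2⟩ := l1_mem
  constructor
  · rw [Real.lt_sqrt (by norm_num), nBar]; linarith
  · rw [Real.sqrt_lt' (by norm_num), nBar]; linarith

lemma nStar_mem : nStar 0.107 ∈ Ioo 0.08 0.12 := by
  obtain ⟨b1, b2⟩ := l1_mem
  obtain ⟨c1, c2⟩ := sqrt_one_sub_nBar_mem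
  constructor <;> (rw [nStar]; linarith)

lemma tauP_lt : tauP 0.107 < 0.04 := by
  obtain ⟨a1, a2⟩ := l0_mem
  obtain ⟨b1, b2⟩ := l1_mem
  obtain ⟨c1, c2⟩ := sqrt_one_sub_nBar_mem
  have : nBar 0.107 = l1 0.107 + l0 0.107 := rfl
  rw [tauP, nStar]; linarith

lemma nLow_mem : nLow 0.107 ∈ Ioo 0 0.035 := by
  obtain ⟨a1, a2⟩ := l0_mem
  obtain ⟨b1, b2⟩ := l1_mem
  rw [nLow]
  constructor
  · exact div_pos (by linarith) l1_pos
  · rw [div_lt_iff₀ l1_pos]; linarith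

lemma nLow_le_nP : nLow 0.107 ≤ nP 0.107 := by
  obtain ⟨a1, a2⟩ := l0_mem
  obtain ⟨b1, b2⟩ := l1_mem
  have hnLow : nLow 0.107 * l1 0.107 = -2 * l0 0.107 := div_mul_cancel₀ _ l1_pos.ne'
  rw [nP, le_div_iff_of_neg l0_neg]
  nlinarith [nLow_mem.1]

lemma nP_lt_one : nP 0.107 < 1 := by
  obtain ⟨h1, h2⟩ := nLow_mem
  rw [nP, div_lt_one_of_neg l0_neg]
  nlinarith [l0_mem.2]

lemma nPP_lt_one : nPP 0.107 < 1 := by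
  obtain ⟨c1, c2⟩ := nStar_mem
  have hτ : tauP 0.107 * nStar 0.107 ≤ 3 / 4 * -l0 0.107 := by
    nlinarith [tauP_lt, l0_mem.2]
  obtain ⟨h1, h2⟩ := nCirc_mem_Icc l0_neg (by linarith) hτ
  rw [nPP, div_lt_one_of_neg l0_neg]
  nlinarith [l0_mem.2]

lemma ps_le_mul_xs (hν : ν ∈ Icc (0:ℝ) 1) : ps 0.107 ν ≤ ν * xs 0.107 ν := by
  obtain ⟨hν0, hν1⟩ := hν
  unfold xs
  split_ifs with h1 h2 h3 h4
  · have := ps_le_mul_tangent (ν := ν) l0_neg.le (nLow 0.107)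
    rwa [add_assoc, l1_add_two_mul_l0_div_nLow l0_neg.ne, add_zero] at this
  · have hν : ν ≠ 0 := by linarith [nLow_mem.1]
    rw [ps, mul_add, mul_div_cancel₀ _ hν, mul_comm]
  · exact ps_le_mul_tangent l0_neg.le _
  · exact ps_le_mul_sub_nBar_add_one discriminant_le
  · rw [ps, mul_one]; nlinarith [l1_mem.2, l0_neg]

lemma ps_le_pms (hν : ν ∈ Icc (0:ℝ) 1) : ps 0.107 ν ≤ pms 0.107 ν := by
  unfold pms
  split_ifs
  · exact ps_le_mul_xs hν
  · exact ps_le_sqrt_piece (by norm_num) (by norm_num) hν.1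
  · exact ps_le_quadratic_piece nBar_lt_one.le
  · exact ps_le_last_piece nBar_lt_one.le hν.2

lemma pms_of_le_nLow (hν : ν ≤ nLow 0.107) : pms 0.107 ν = ν * xs 0.107 ν := by
  rw [pms, if_pos (hν.trans nLow_le_nP)]

lemma pms_one : pms 0.107 1 = ps 0.107 1 := by
  rw [pms, if_neg nP_lt_one.not_ge, if_neg nPP_lt_one.not_ge, if_neg nBar_lt_one.not_ge, ps, nBar]
  ring

lemma tangent_le_pms {m : ℝ} (hm : m ∈ Icc 0 (nLow 0.107)) (hν : ν ∈ Icc (0:ℝ) 1) :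
    xs 0.107 m * (2 * ν - m) ≤ pms 0.107 ν := by
  have hc : 0 ≤ -(l0 0.107 / nLow 0.107 ^ 2) :=
    neg_nonneg.2 (div_nonpos_of_nonpos_of_nonneg l0_neg.le (sq_nonneg _))
  rw [xs_of_le_nLow hm.2]
  rcases le_or_gt ν (nLow 0.107) with h | h
  · rw [pms_of_le_nLow h, xs_of_le_nLow h]
    nlinarith [mul_nonneg hc (sq_nonneg (ν - m))]
  · have := ps_le_pms hν
    rw [ps_eq_tangent l0_neg.ne l1_pos.ne', xs_of_le_nLow le_rfl] at this
    have hgap : 0 ≤ 2 * ν - nLow 0.107 - m := by linarith [hm.2]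
    nlinarith [mul_nonneg hc (mul_nonneg (sub_nonneg.2 hm.2) hgap)]

lemma pms_nonneg (hν : ν ∈ Icc (0:ℝ) 1) : 0 ≤ pms 0.107 ν := by
  simpa [xs_of_le_nLow nLow_mem.1.le] using tangent_le_pms ⟨le_rfl, nLow_mem.1.le⟩ hν

lemma worstCase_pms_of_le_nLow (h0 : 0 ≤ μ) (h : μ ≤ nLow 0.107) :
    worstCase μ (pms 0.107) = μ * xs 0.107 μ := by
  have hμ : μ ∈ Icc (0:ℝ) 1 := ⟨h0, h.trans nLow_mem.2.le |>.trans (by norm_num)⟩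
  have := worstCase_eq_of_affine_le (α := 2 * xs 0.107 μ) (β := -(μ * xs 0.107 μ))
    (measurable_pms 0.107) (exists_norm_pms_le 0.107)
    (fun ν hν => by linarith [tangent_le_pms ⟨h0, h⟩ hν]) (memAmb_dirac hμ)
    (by rw [integral_dirac, pms_of_le_nLow h]; ring)
  rw [this]; ring

lemma worstCase_pms_of_nLow_le (h : nLow 0.107 ≤ μ) (h1 : μ ≤ 1) :
    worstCase μ (pms 0.107) = ps 0.107 μ := by
  obtain ⟨hL0, hL1⟩ := nLow_mem
  set θ := (1 - μ) / (1 - nLow 0.107)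
  have hθ : θ * (1 - nLow 0.107) = 1 - μ := div_mul_cancel₀ _ (by linarith)
  have hθI : θ ∈ Icc (0:ℝ) 1 :=
    ⟨div_nonneg (by linarith) (by linarith), (div_le_one (by linarith)).2 (by linarith)⟩
  have hP := memAmb_twoPoint hθI ⟨hL0.le, by linarith⟩ ⟨zero_le_one, le_rfl⟩
  rw [show θ * nLow 0.107 + (1 - θ) * 1 = μ by linear_combination -hθ] at hP
  refine worstCase_eq_of_affine_le (measurable_pms 0.107) (exists_norm_pms_le 0.107)
    (fun ν hν => ps_le_pms hν) hP ?_
  have hnLow : pms 0.107 (nLow 0.107) = ps 0.107 (nLow 0.107) := by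
    rw [pms_of_le_nLow le_rfl, ps_eq_tangent l0_neg.ne l1_pos.ne']
    ring
  rw [integral_twoPoint hθI, hnLow, pms_one, ps, ps]
  linear_combination (-l1 0.107) * hθ

end MuStar

section UpperBound

variable {x p : ℝ → ℝ} {μ : ℝ}

lemma Feasible.worstCase_le_two_point (hF : Feasible x p) (h0 : 0 < μ) (h1 : μ ≤ 1) :
    worstCase μ p ≤ μ / (2 - μ) := by
  set q := μ / (2 - μ)
  have hq : (2 - μ) * q = μ := mul_div_cancel₀ _ (by linarith)
  have hqI : q ∈ Icc (0:ℝ) 1 :=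
    ⟨div_nonneg h0.le (by linarith), (div_le_one (by linarith)).2 (by linarith)⟩
  have h1I : (1:ℝ) ∈ Icc (0:ℝ) 1 := ⟨zero_le_one, le_rfl⟩
  have hθI : 1 - μ / 2 ∈ Icc (0:ℝ) 1 := ⟨by linarith, by linarith⟩
  have hP := memAmb_twoPoint hθI hqI h1I
  rw [show (1 - μ / 2) * q + (1 - (1 - μ / 2)) * 1 = μ by linear_combination hq / 2] at hP
  refine worstCase_le_of_memAmb hqI.1 hP ?_
  rw [integral_twoPoint hθI]
  have e1 := mul_le_mul_of_nonneg_left (hF.ir q hqI) hθI.1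
  have e2 := mul_le_mul_of_nonneg_left (hF.ic 1 h1I q hqI) (sub_nonneg.2 hθI.2)
  have e3 := mul_le_mul_of_nonneg_left (hF.x_mem 1 h1I).2 (sub_nonneg.2 hθI.2)
  linear_combination e1 + e2 + e3 + (x q - 1) / 2 * hq

lemma Feasible.worstCase_le_three_point (hF : Feasible x p) (h0 : 0 < μ) (h1 : μ ≤ 3 / 4) :
    worstCase μ p ≤ (μ / 3) * (√(μ / (3 - μ)) + 1) ^ 2 := by
  set s := √(μ / (3 - μ))
  have hs0 : 0 < s := Real.sqrt_pos.2 (div_pos h0 (by linarith))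
  have hs2 : s ^ 2 ≤ 1 / 3 := by
    rw [show s ^ 2 = del μ from sq_sqrt_del h0.le (by linarith), del, div_le_iff₀ (by linarith)]
    linarith
  have hμs : μ * (1 + s ^ 2) = 3 * s ^ 2 := mul_one_add_sq_sqrt_del h0.le (by linarith)
  set k := μ / 3
  set a : Fin 3 → ℝ := ![s ^ 2 * (s + 1), s ^ 2 + s, 1]
  set w : Fin 3 → ℝ := ![k / (s ^ 2 * (s + 1)), k / (s ^ 2 + s), k]
  have ha1 : s ^ 2 + s ≤ 1 := by nlinarith
  have ha : ∀ i, a i ∈ Icc (0:ℝ) 1 := Fin.forall_fin_succ.2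
    ⟨show s ^ 2 * (s + 1) ∈ Icc (0:ℝ) 1 from ⟨by positivity, by nlinarith⟩,
      Fin.forall_fin_two.2
        ⟨show s ^ 2 + s ∈ Icc (0:ℝ) 1 from ⟨by positivity, ha1⟩, ⟨zero_le_one, le_rfl⟩⟩⟩
  have hw : ∀ i, 0 ≤ w i := Fin.forall_fin_succ.2
    ⟨show 0 ≤ k / (s ^ 2 * (s + 1)) by positivity,
      Fin.forall_fin_two.2 ⟨show 0 ≤ k / (s ^ 2 + s) by positivity, show 0 ≤ k by positivity⟩⟩
  have hk : ∀ i, w i * a i = k := Fin.forall_fin_succ.2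
    ⟨div_mul_cancel₀ _ (by positivity),
      Fin.forall_fin_two.2 ⟨div_mul_cancel₀ _ (by positivity), mul_one k⟩⟩
  have hw1 : ∑ i, w i = 1 := by
    simp only [w, Fin.sum_univ_three, Matrix.cons_val_zero, Matrix.cons_val_one, Matrix.cons_val]
    field_simp
    linear_combination (1 + s) / 3 * hμs
  have hP := memAmb_discreteDist hw hw1 ha
  rw [show ∑ i, w i * a i = μ by
    simp only [hk, Finset.sum_const, Finset.card_univ, Fintype.card_fin]; ring] at hP
  refine worstCase_le_of_memAmb (by positivity) hP ?_
  rw [integral_discreteDist hw, Fin.sum_univ_three]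
  have e1 := mul_le_mul_of_nonneg_left (hF.ir _ (ha 0)) (hw 0)
  have e2 := mul_le_mul_of_nonneg_left (hF.ic _ (ha 1) _ (ha 0)) (hw 1)
  have e3 := mul_le_mul_of_nonneg_left (hF.ic _ (ha 2) _ (ha 1)) (hw 2)
  have e4 := mul_le_mul_of_nonneg_left (hF.x_mem _ (ha 2)).2 (hw 2)
  have h10 : w 1 * a 0 = k * s := by
    simp only [w, a, Matrix.cons_val_zero, Matrix.cons_val_one]
    field_simp
  have h21 : w 2 * a 1 = k * (s ^ 2 + s) := rfl
  simp only [show a 2 = 1 from rfl, show w 2 = k from rfl] at e3 e4 h21 ⊢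
  linear_combination e1 + e2 + e3 + e4 + x (a 0) * hk 0 + (x (a 1) - x (a 0)) * hk 1 + h10 + h21

lemma bBound_pos (h0 : 0 < μ) (h2 : μ < 2) : 0 < bBound μ :=
  lt_min (div_pos h0 (by linarith)) (by positivity)

lemma zStar_le_bBound (h0 : 0 < μ) (h1 : μ ≤ 3 / 4) : zStar μ ≤ bBound μ := by
  refine Real.sSup_le ?_ (bBound_pos h0 (by linarith)).le
  rintro _ ⟨x, p, hF, rfl⟩
  exact le_min (hF.worstCase_le_two_point h0 (by linarith)) (hF.worstCase_le_three_point h0 h1)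

end UpperBound

/-- Fix `μ* = 0.107` and consider the maximal-payment mechanism
`(x^s, p_m^s)` defined from `μ*`. For every `μ ∈ (0, 0.107)`: (i) the worst-case expected
payment of `(x^s, p_m^s)` over `P_μ` equals `μ·x^s(μ)` if `μ ≤ ν̲` and `λ₁μ + λ₀` if
`ν̲ ≤ μ`; (ii) `z*(μ) ≤ b(μ)`; hence the relative and absolute performance guarantees
`z_{μ*} ≥ (z_{μ*}/b(μ))·z*(μ)` and `z_{μ*} ≥ z*(μ) − (b(μ) − z_{μ*})` hold. -/
theorem approximation_mechanism_guarantees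
    (μ : ℝ) (hμ : μ ∈ Set.Ioo (0:ℝ) 0.107) :
    ((μ ≤ nLow 0.107 → worstCase μ (pms 0.107) = μ * xs 0.107 μ) ∧
     (nLow 0.107 ≤ μ → worstCase μ (pms 0.107) = l1 0.107 * μ + l0 0.107)) ∧
    zStar μ ≤ bBound μ ∧
    worstCase μ (pms 0.107) ≥ (worstCase μ (pms 0.107)/bBound μ) * zStar μ ∧
    worstCase μ (pms 0.107) ≥ zStar μ - (bBound μ - worstCase μ (pms 0.107)) := by
  obtain ⟨h0, h1⟩ := hμ
  have hz := zStar_le_bBound h0 (by linarith)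
  have hb := bBound_pos h0 (by linarith)
  have hW : 0 ≤ worstCase μ (pms 0.107) := worstCase_nonneg fun ν hν => MuStar.pms_nonneg hν
  refine ⟨⟨fun h => MuStar.worstCase_pms_of_le_nLow h0.le h,
    fun h => MuStar.worstCase_pms_of_nLow_le h (by linarith)⟩, hz, ?_, by linarith⟩
  calc worstCase μ (pms 0.107) / bBound μ * zStar μ
      ≤ worstCase μ (pms 0.107) / bBound μ * bBound μ := by gcongr
    _ = worstCase μ (pms 0.107) := div_mul_cancel₀ _ hb.ne'

end
end
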